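/- arXiv:2206.05263 — 6 statements merged into one kernel-verified Lean document; each statement's English description precedes it below -/
import Mathlib

section
/- Let X, Y, Z be random variables on a probability space, where Y takes values in the finite set {1,...,m}, Z takes values in a measurable space 𝒵, and let b : 𝒵 → ℬ be a measurable function into a measurable space ℬ. Define the propensity score s(Z) = (P(Y = y | Z))_{y=1}^m, a σ(Z)-measurable ℝ^m-valued random variable. If there exists a measurable function g : ℬ → ℝ^m such that s(Z) = g(b(Z)) almost surely (i.e. b(Z) is finer than s(Z)), then Y and Z are conditionally independent given the σ-algebra generated by b(Z); that is, b(Z) is a balancing score. -/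
/-!
Since `P(Y = y | Z) = g(b(Z))_y` is already `σ(b(Z))`-measurable, the tower property gives
`P(Y = y | b(Z)) = P(Y = y | Z)`. For an event `B ∈ σ(Z)`, pulling `1_B` out of the inner
conditional expectation gives
`P(Y = y, B | b(Z)) = E[1_B · P(Y = y | Z) | b(Z)] = P(Y = y | b(Z)) · P(B | b(Z))`,
and an event `Y ∈ S` is a finite disjoint union of events `Y = y`.
-/

open MeasureTheory ProbabilityTheory

namespace MeasureTheory

variable {Ω : Type*} {m₁ m₂ mΩ : MeasurableSpace Ω} {μ : Measure Ω}

lemma condExp_ae_eq_of_condExp_ae_eq_of_stronglyMeasurable {E : Type*} [NormedAddCommGroup E]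
    [NormedSpace ℝ E] [CompleteSpace E] (hm₁₂ : m₁ ≤ m₂) (hm₂ : m₂ ≤ mΩ)
    [SigmaFinite (μ.trim (hm₁₂.trans hm₂))] {X f : Ω → E} (hf : StronglyMeasurable[m₁] f)
    (hXf : μ[X | m₂] =ᵐ[μ] f) : μ[X | m₁] =ᵐ[μ] f := by
  have := sigmaFiniteTrim_mono (μ := μ) hm₂ hm₁₂
  calc μ[X | m₁] =ᵐ[μ] μ[μ[X | m₂] | m₁] := (condExp_condExp_of_le hm₁₂ hm₂).symm
    _ =ᵐ[μ] μ[f | m₁] := condExp_congr_ae hXf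
    _ = f := condExp_of_stronglyMeasurable (hm₁₂.trans hm₂) hf (integrable_condExp.congr hXf)

lemma condExp_indicator_inter_ae_eq_mul [IsFiniteMeasure μ] (hm₁₂ : m₁ ≤ m₂) (hm₂ : m₂ ≤ mΩ)
    {A B : Set Ω} (hA : MeasurableSet A) (hB : MeasurableSet[m₂] B) {f : Ω → ℝ}
    (hf : StronglyMeasurable[m₁] f) (hAf : μ⟦A | m₂⟧ =ᵐ[μ] f) :
    μ⟦A ∩ B | m₁⟧ =ᵐ[μ] μ⟦A | m₁⟧ * μ⟦B | m₁⟧ := by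
  set I : Set Ω → Ω → ℝ := fun C ↦ C.indicator fun _ ↦ 1
  have hB' : MeasurableSet B := hm₂ B hB
  have hI_int : ∀ {C : Set Ω}, MeasurableSet C → Integrable (I C) μ :=
    fun hC ↦ (integrable_const 1).indicator hC
  have hI_inter : I (A ∩ B) = I B * I A := by
    rw [Set.inter_comm]; exact Set.inter_indicator_one
  have hfI : f * I B = B.indicator f := by
    ext ω; by_cases h : ω ∈ B <;> simp [I, h]
  calc μ[I (A ∩ B) | m₁]
      =ᵐ[μ] μ[μ[I B * I A | m₂] | m₁] := by
        rw [hI_inter]; exact (condExp_condExp_of_le hm₁₂ hm₂).symm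
    _ =ᵐ[μ] μ[I B * f | m₁] := by
        refine condExp_congr_ae ((condExp_mul_of_stronglyMeasurable_left
          (stronglyMeasurable_const.indicator hB) ?_ (hI_int hA)).trans hAf.mul_left)
        rw [← hI_inter]; exact hI_int (hA.inter hB')
    _ =ᵐ[μ] f * μ[I B | m₁] := by
        rw [mul_comm]
        refine condExp_mul_of_stronglyMeasurable_left hf ?_ (hI_int hB')
        rw [hfI]; exact (integrable_condExp.congr hAf).indicator hB'
    _ =ᵐ[μ] μ⟦A | m₁⟧ * μ⟦B | m₁⟧ :=
        (condExp_ae_eq_of_condExp_ae_eq_of_stronglyMeasurable hm₁₂ hm₂ hf hAf).symm.mul_right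

lemma condExp_indicator_biUnion_ae_eq_sum {ι : Type*} [IsFiniteMeasure μ]
    (s : Finset ι) {A : ι → Set Ω} (hA : ∀ i ∈ s, MeasurableSet (A i))
    (hdisj : (s : Set ι).PairwiseDisjoint A) :
    μ⟦⋃ i ∈ s, A i | m₁⟧ =ᵐ[μ] ∑ i ∈ s, μ⟦A i | m₁⟧ := by
  rw [Finset.indicator_biUnion s A hdisj, ← Finset.sum_fn]
  exact condExp_finsetSum (μ := μ)
    (fun i hi ↦ (integrable_const (1 : ℝ)).indicator (hA i hi)) m₁

end MeasureTheory

theorem balancing_score_of_finer_than_propensity_general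
    {Ω 𝒵 ℬ : Type*} [mΩ : MeasurableSpace Ω] [StandardBorelSpace Ω] [Nonempty Ω]
    {m𝒵 : MeasurableSpace 𝒵} {mℬ : MeasurableSpace ℬ}
    (μ : Measure Ω) [IsProbabilityMeasure μ]
    {m : ℕ} (Y : Ω → Fin m) (Z : Ω → 𝒵) (b : 𝒵 → ℬ)
    (hY : Measurable Y) (hZ : Measurable Z) (hb : Measurable b)
    -- the propensity score `s(Z) = (P(Y = y | Z))_{y=1}^m`, a `σ(Z)`-measurable random vector
    (s : Ω → Fin m → ℝ)
    (hs : ∀ y : Fin m,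
      (fun ω => s ω y) =ᵐ[μ]
        μ[Set.indicator {ω | Y ω = y} (fun _ => (1 : ℝ)) | MeasurableSpace.comap Z m𝒵])
    -- `b(Z)` is finer than `s(Z)`: `s(Z) = g(b(Z))` almost surely for some measurable `g`
    (hfiner : ∃ g : ℬ → Fin m → ℝ, Measurable g ∧ s =ᵐ[μ] fun ω => g (b (Z ω))) :
    -- conclusion: `Y ⫫ Z | σ(b ∘ Z)`
    CondIndepFun (MeasurableSpace.comap (fun ω => b (Z ω)) mℬ)
      ((hb.comp hZ).comap_le) Y Z μ := by
  obtain ⟨g, hg, hsg⟩ := hfiner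
  have hbZ_le : MeasurableSpace.comap (fun ω => b (Z ω)) mℬ ≤ MeasurableSpace.comap Z m𝒵 :=
    (hb.comp (comap_measurable Z)).comap_le
  have hpropensity : ∀ y, μ⟦Y ⁻¹' {y} | MeasurableSpace.comap Z m𝒵⟧ =ᵐ[μ]
      fun ω => g (b (Z ω)) y := fun y => (hs y).symm.trans (hsg.mono fun ω h => congrFun h y)
  rw [condIndepFun_iff_condExp_inter_preimage_eq_mul hY hZ]
  intro S t hS ht
  set T := S.toFinite.toFinset
  have hYS : Y ⁻¹' S = ⋃ y ∈ T, Y ⁻¹' {y} := by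
    rw [← Set.preimage_iUnion₂]; congr; ext y; simp [T]
  have hgT : StronglyMeasurable[MeasurableSpace.comap (fun ω => b (Z ω)) mℬ]
      fun ω => ∑ y ∈ T, g (b (Z ω)) y :=
    ((Finset.measurable_sum T fun y _ => (measurable_pi_apply y).comp hg).comp
      (comap_measurable _)).stronglyMeasurable
  have hpropensityS : μ⟦Y ⁻¹' S | MeasurableSpace.comap Z m𝒵⟧ =ᵐ[μ]
      fun ω => ∑ y ∈ T, g (b (Z ω)) y := by
    rw [hYS]
    refine (condExp_indicator_biUnion_ae_eq_sum T (fun y _ => hY (measurableSet_singleton y))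
      fun _ _ _ _ hne => (Set.disjoint_singleton.mpr hne).preimage Y).trans ?_
    filter_upwards [ae_all_iff.2 hpropensity] with ω hω
    simp [Finset.sum_apply, hω]
  exact condExp_indicator_inter_ae_eq_mul hbZ_le hZ.comap_le (hY hS) ⟨t, ht, rfl⟩ hgT
    hpropensityS

/-- **Rosenbaum–Rubin, sufficiency direction.**
If the propensity score `s ω = (P(Y = y | σ(Z)))_{y=1,…,m}` is almost surely a measurable
function of `b ∘ Z` (i.e. `b(Z)` is finer than `s(Z)`), then `Y` and `Z` are conditionally
independent given the σ-algebra generated by `b ∘ Z`; that is, `b(Z)` is a balancing score. -/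
theorem balancing_score_of_finer_than_propensity
    {Ω 𝒵 ℬ : Type*} [mΩ : MeasurableSpace Ω] [StandardBorelSpace Ω] [Nonempty Ω]
    {m𝒵 : MeasurableSpace 𝒵} {mℬ : MeasurableSpace ℬ}
    (μ : Measure Ω) [IsProbabilityMeasure μ]
    {m : ℕ} (Y : Ω → Fin m) (Z : Ω → 𝒵) (b : 𝒵 → ℬ)
    (hY : Measurable Y) (hZ : Measurable Z) (hb : Measurable b)
    -- the propensity score `s(Z) = (P(Y = y | Z))_{y=1}^m`, a `σ(Z)`-measurable random vector
    (s : Ω → Fin m → ℝ)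
    (hs_meas : Measurable[MeasurableSpace.comap Z m𝒵] s)
    (hs : ∀ y : Fin m,
      (fun ω => s ω y) =ᵐ[μ]
        μ[Set.indicator {ω | Y ω = y} (fun _ => (1 : ℝ)) | MeasurableSpace.comap Z m𝒵])
    -- `b(Z)` is finer than `s(Z)`: `s(Z) = g(b(Z))` almost surely for some measurable `g`
    (hfiner : ∃ g : ℬ → Fin m → ℝ, Measurable g ∧ s =ᵐ[μ] fun ω => g (b (Z ω))) :
    -- conclusion: `Y ⫫ Z | σ(b ∘ Z)`
    CondIndepFun (MeasurableSpace.comap (fun ω => b (Z ω)) mℬ)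
      ((hb.comp hZ).comap_le) Y Z μ :=
  balancing_score_of_finer_than_propensity_general (mΩ := mΩ) μ Y Z b hY hZ hb s hs hfiner
end

section
/- Let X, Y, Z be random variables on a probability space, where Y takes values in the finite set {1,...,m}, Z takes values in a measurable space 𝒵, and let b : 𝒵 → ℬ be a measurable function into a measurable space ℬ. Define the propensity score s(Z) = (P(Y = y | Z))_{y=1}^m. If Y and Z are conditionally independent given the σ-algebra generated by b(Z) (i.e. b(Z) is a balancing score), then s(Z) is almost surely equal to a σ(b(Z))-measurable function; that is, there exists a measurable function g : ℬ → ℝ^m with s(Z) = g(b(Z)) almost surely, so b(Z) is finer than s(Z). -/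
/-!
Since `σ(b ∘ Z) ≤ σ(Z)`, conditional independence of `Y` and `Z` given `σ(b ∘ Z)` says that
conditioning on the finer `σ(Z)` adds nothing: `P(Y = y | Z) = P(Y = y | b(Z))` a.e. The right-hand
side is `σ(b ∘ Z)`-measurable, so by Doob–Dynkin it is a measurable function of `b ∘ Z`.
-/

open MeasureTheory ProbabilityTheory

theorem ProbabilityTheory.CondIndep.condExp_indicator_eq_of_le {Ω : Type*}
    {m' m₁ m₂ mΩ : MeasurableSpace Ω} [StandardBorelSpace Ω] {μ : Measure Ω} [IsFiniteMeasure μ]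
    {hm' : m' ≤ mΩ} (h : CondIndep m' m₁ m₂ hm' μ) (hm₁ : m₁ ≤ mΩ) (hm₂ : m₂ ≤ mΩ)
    (hle : m' ≤ m₂) {s : Set Ω} (hs : MeasurableSet[m₁] s) :
    μ⟦s | m₂⟧ =ᵐ[μ] μ⟦s | m'⟧ := by
  refine (ae_eq_condExp_of_forall_setIntegral_eq hm₂ ((integrable_const 1).indicator (hm₁ _ hs))
    (fun _ _ _ => integrable_condExp.integrableOn) (fun t ht _ => ?_)
    (stronglyMeasurable_condExp.mono hle).aestronglyMeasurable).symm
  have ht' : MeasurableSet[mΩ] t := hm₂ _ ht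
  have hmul : t.indicator (μ⟦s | m'⟧) = μ⟦s | m'⟧ * t.indicator 1 := by
    ext ω; by_cases hω : ω ∈ t <;> simp [hω]
  calc ∫ ω in t, (μ⟦s | m'⟧) ω ∂μ
      = ∫ ω, (μ[μ⟦s | m'⟧ * t.indicator 1 | m']) ω ∂μ := by
        rw [integral_condExp hm', ← hmul, integral_indicator ht']
    _ = ∫ ω, (μ⟦s ∩ t | m'⟧) ω ∂μ := by
        refine integral_congr_ae ?_
        refine (condExp_mul_of_stronglyMeasurable_left stronglyMeasurable_condExp
          (hmul ▸ integrable_condExp.indicator ht') ((integrable_const 1).indicator ht')).trans ?_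
        exact ((condIndep_iff _ _ _ _ hm₁ hm₂ μ).1 h s t hs ht).symm
    _ = ∫ ω in t, s.indicator (fun _ => (1 : ℝ)) ω ∂μ := by
        rw [integral_condExp hm', Set.inter_comm, ← Set.indicator_indicator,
          integral_indicator ht']

theorem finer_than_propensity_of_balancing_score_general
    {Ω 𝒵 ℬ : Type*} [mΩ : MeasurableSpace Ω] [StandardBorelSpace Ω]
    {m𝒵 : MeasurableSpace 𝒵} {mℬ : MeasurableSpace ℬ}
    (μ : Measure Ω) [IsProbabilityMeasure μ]
    {m : ℕ} (Y : Ω → Fin m) (Z : Ω → 𝒵) (b : 𝒵 → ℬ)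
    (hY : Measurable Y) (hZ : Measurable Z) (hb : Measurable b)
    -- the propensity score `s(Z) = (P(Y = y | Z))_{y=1}^m`, a `σ(Z)`-measurable random vector
    (s : Ω → Fin m → ℝ)
    (hs : ∀ y : Fin m,
      (fun ω => s ω y) =ᵐ[μ]
        μ[Set.indicator {ω | Y ω = y} (fun _ => (1 : ℝ)) | MeasurableSpace.comap Z m𝒵])
    -- `b(Z)` is a balancing score: `Y ⫫ Z | σ(b ∘ Z)`
    (hbal : CondIndepFun (MeasurableSpace.comap (fun ω => b (Z ω)) mℬ)
      ((hb.comp hZ).comap_le) Y Z μ) :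
    -- conclusion: `b(Z)` is finer than `s(Z)`
    ∃ g : ℬ → Fin m → ℝ, Measurable g ∧ s =ᵐ[μ] fun ω => g (b (Z ω)) := by
  set mB := MeasurableSpace.comap (fun ω => b (Z ω)) mℬ
  have hle : mB ≤ MeasurableSpace.comap Z m𝒵 := (hb.comp (comap_measurable Z)).comap_le
  have hprop : ∀ y, (fun ω => s ω y) =ᵐ[μ] μ⟦Y ⁻¹' {y} | mB⟧ := fun y =>
    (hs y).trans <| ((condIndepFun_iff_condIndep _ _ _ _ _).1 hbal).condExp_indicator_eq_of_le
      hY.comap_le hZ.comap_le hle ⟨{y}, measurableSet_singleton y, rfl⟩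
  have hmeas : Measurable[mB] fun ω y => (μ⟦Y ⁻¹' {y} | mB⟧) ω :=
    measurable_pi_lambda _ fun _ => stronglyMeasurable_condExp.measurable
  obtain ⟨g, hg, hfac⟩ := hmeas.exists_eq_measurable_comp
  refine ⟨g, hg, ?_⟩
  filter_upwards [ae_all_iff.2 hprop] with ω hω
  ext y
  rw [hω y]
  exact congrFun (congrFun hfac ω) y

/-- **Rosenbaum–Rubin, necessity direction.**
If `Y` and `Z` are conditionally independent given the σ-algebra generated by `b ∘ Z`
(i.e. `b(Z)` is a balancing score), then the propensity score
`s ω = (P(Y = y | σ(Z)))_{y=1,…,m}` is almost surely a measurable function of `b ∘ Z`;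
that is, `b(Z)` is finer than `s(Z)`. -/
theorem finer_than_propensity_of_balancing_score
    {Ω 𝒵 ℬ : Type*} [mΩ : MeasurableSpace Ω] [StandardBorelSpace Ω] [Nonempty Ω]
    {m𝒵 : MeasurableSpace 𝒵} {mℬ : MeasurableSpace ℬ}
    (μ : Measure Ω) [IsProbabilityMeasure μ]
    {m : ℕ} (Y : Ω → Fin m) (Z : Ω → 𝒵) (b : 𝒵 → ℬ)
    (hY : Measurable Y) (hZ : Measurable Z) (hb : Measurable b)
    -- the propensity score `s(Z) = (P(Y = y | Z))_{y=1}^m`, a `σ(Z)`-measurable random vector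
    (s : Ω → Fin m → ℝ)
    (hs_meas : Measurable[MeasurableSpace.comap Z m𝒵] s)
    (hs : ∀ y : Fin m,
      (fun ω => s ω y) =ᵐ[μ]
        μ[Set.indicator {ω | Y ω = y} (fun _ => (1 : ℝ)) | MeasurableSpace.comap Z m𝒵])
    -- `b(Z)` is a balancing score: `Y ⫫ Z | σ(b ∘ Z)`
    (hbal : CondIndepFun (MeasurableSpace.comap (fun ω => b (Z ω)) mℬ)
      ((hb.comp hZ).comap_le) Y Z μ) :
    -- conclusion: `b(Z)` is finer than `s(Z)`
    ∃ g : ℬ → Fin m → ℝ, Measurable g ∧ s =ᵐ[μ] fun ω => g (b (Z ω)) :=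
  finer_than_propensity_of_balancing_score_general (mΩ := mΩ) μ Y Z b hY hZ hb s hs hbal
end

section
/- Let Y be a random variable taking values in the finite set {1,...,m} and Z a random variable taking values in a measurable space 𝒵 on a common probability space. Let s(Z) = (P(Y = y | Z))_{y=1}^m be the propensity score, viewed as a σ(Z)-measurable random variable with values in ℝ^m. Then Y and Z are conditionally independent given the σ-algebra generated by s(Z); that is, the propensity score is itself a balancing score. -/
/-!
Write `ℋ = σ(Z)` and `𝒢 = σ(s) ≤ ℋ`. For every event `{Y ∈ A}`, `P(Y ∈ A | ℋ) = ∑_{y ∈ A} s_y`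
is a function of `s`, hence `𝒢`-measurable. Whenever `E[f | ℋ]` is `𝒢`-measurable, the tower
property and pulling out known factors give, for bounded `ℋ`-measurable `g`,
`E[f g | 𝒢] = E[g E[f | ℋ] | 𝒢] = E[f | ℋ] E[g | 𝒢] = E[f | 𝒢] E[g | 𝒢]`.
Taking `f = 1{Y ∈ A}` and `g = 1{Z ∈ B}` gives the conditional independence of `Y` and `Z` given `𝒢`.
-/

open MeasureTheory ProbabilityTheory

section

variable {Ω : Type*} {m mΩ : MeasurableSpace Ω} {μ : Measure Ω} [IsFiniteMeasure μ]

theorem condExp_mul_ae_eq_mul_condExp_of_aestronglyMeasurable_condExp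
    {m𝒢 mℋ : MeasurableSpace Ω} (h𝒢ℋ : m𝒢 ≤ mℋ) (hℋ : mℋ ≤ mΩ) {f g : Ω → ℝ}
    (hf : Integrable f μ) (hf𝒢 : AEStronglyMeasurable[m𝒢] (μ[f | mℋ]) μ)
    (hg : StronglyMeasurable[mℋ] g) (c : ℝ) (hg_bound : ∀ᵐ ω ∂μ, ‖g ω‖ ≤ c) :
    μ[f * g | m𝒢] =ᵐ[μ] μ[f | m𝒢] * μ[g | m𝒢] := by
  have hf_eq : μ[f | m𝒢] =ᵐ[μ] μ[f | mℋ] :=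
    (condExp_condExp_of_le h𝒢ℋ hℋ).symm.trans
      (condExp_of_aestronglyMeasurable' (h𝒢ℋ.trans hℋ) hf𝒢 integrable_condExp)
  have hg_int : Integrable g μ := .of_bound (hg.mono hℋ).aestronglyMeasurable c hg_bound
  calc μ[f * g | m𝒢] = μ[g * f | m𝒢] := by rw [mul_comm]
    _ =ᵐ[μ] μ[μ[g * f | mℋ] | m𝒢] := (condExp_condExp_of_le h𝒢ℋ hℋ).symm
    _ =ᵐ[μ] μ[g * μ[f | mℋ] | m𝒢] :=
      condExp_congr_ae (condExp_stronglyMeasurable_mul_of_bound hℋ hg hf c hg_bound)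
    _ =ᵐ[μ] μ[g | m𝒢] * μ[f | mℋ] :=
      condExp_mul_of_aestronglyMeasurable_right hf𝒢
        (integrable_condExp.bdd_mul (hg.mono hℋ).aestronglyMeasurable hg_bound) hg_int
    _ =ᵐ[μ] μ[f | m𝒢] * μ[g | m𝒢] := by
      filter_upwards [hf_eq] with ω hω
      simp only [Pi.mul_apply, hω, mul_comm]

section FiniteValued

variable {α : Type*} [MeasurableSpace α] [MeasurableSingletonClass α] {Y : Ω → α}

theorem condExp_indicator_preimage_ae_eq_sum (hY : Measurable Y) (A : Finset α) :
    μ⟦Y ⁻¹' A | m⟧ =ᵐ[μ] ∑ y ∈ A, μ⟦Y ⁻¹' {y} | m⟧ := by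
  have h_sum : (Y ⁻¹' A).indicator (fun _ => (1 : ℝ))
      = ∑ y ∈ A, (Y ⁻¹' {y}).indicator (fun _ => 1) := by
    classical
    ext ω
    simp [Set.indicator_apply]
  rw [h_sum]
  exact condExp_finsetSum (fun y _ =>
    (integrable_const (1 : ℝ)).indicator (hY (measurableSet_singleton y))) m

theorem aestronglyMeasurable_comap_condExp_indicator_preimage [Finite α] (hY : Measurable Y)
    {s : Ω → α → ℝ} (hs : ∀ y, (fun ω => s ω y) =ᵐ[μ] μ⟦Y ⁻¹' {y} | m⟧) (A : Set α) :
    AEStronglyMeasurable[MeasurableSpace.comap s MeasurableSpace.pi] (μ⟦Y ⁻¹' A | m⟧) μ := by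
  have hA := condExp_indicator_preimage_ae_eq_sum (μ := μ) (m := m) hY A.toFinite.toFinset
  rw [A.toFinite.coe_toFinset] at hA
  refine ⟨fun ω => ∑ y ∈ A.toFinite.toFinset, s ω y, ?_, ?_⟩
  · exact (Finset.measurable_sum _ fun y _ =>
      (measurable_pi_apply y).comp (comap_measurable s)).stronglyMeasurable
  · filter_upwards [hA, ae_all_iff.2 hs] with ω hA_ω hs_ω
    simp [hA_ω, hs_ω]

end FiniteValued

end

theorem propensity_score_is_balancing_score_general
    {Ω 𝒵 : Type*} [mΩ : MeasurableSpace Ω] [StandardBorelSpace Ω]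
    {m𝒵 : MeasurableSpace 𝒵}
    (μ : Measure Ω) [IsProbabilityMeasure μ]
    {m : ℕ} (Y : Ω → Fin m) (Z : Ω → 𝒵)
    (hY : Measurable Y) (hZ : Measurable Z)
    -- the propensity score `s(Z) = (P(Y = y | Z))_{y=1}^m`, a `σ(Z)`-measurable random vector
    (s : Ω → Fin m → ℝ)
    (hs_meas : Measurable[MeasurableSpace.comap Z m𝒵] s)
    (hs : ∀ y : Fin m,
      (fun ω => s ω y) =ᵐ[μ]
        μ[Set.indicator {ω | Y ω = y} (fun _ => (1 : ℝ)) | MeasurableSpace.comap Z m𝒵]) :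
    -- conclusion: `Y ⫫ Z | σ(s)`
    CondIndepFun (MeasurableSpace.comap s (inferInstance : MeasurableSpace (Fin m → ℝ)))
      (hs_meas.comap_le.trans hZ.comap_le) Y Z μ := by
  rw [condIndepFun_iff_condExp_inter_preimage_eq_mul hY hZ]
  intro A B _ hB
  have h_inter : (Y ⁻¹' A ∩ Z ⁻¹' B).indicator (fun _ => (1 : ℝ))
      = (Y ⁻¹' A).indicator (fun _ => 1) * (Z ⁻¹' B).indicator (fun _ => 1) :=
    Set.inter_indicator_one
  rw [h_inter]
  exact condExp_mul_ae_eq_mul_condExp_of_aestronglyMeasurable_condExp hs_meas.comap_le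
    hZ.comap_le ((integrable_const 1).indicator (hY .of_discrete))
    (aestronglyMeasurable_comap_condExp_indicator_preimage hY hs A)
    (stronglyMeasurable_const.indicator ⟨B, hB, rfl⟩) 1
    (.of_forall fun _ => (norm_indicator_le_norm_self _ _).trans_eq norm_one)

/-- **The propensity score is a balancing score.**
Let `s ω = (P(Y = y | σ(Z)))_{y=1,…,m}` be the propensity score, a `σ(Z)`-measurable
random vector with values in `ℝ^m`. Then `Y` and `Z` are conditionally independent given
the σ-algebra generated by `s`. -/
theorem propensity_score_is_balancing_score
    {Ω 𝒵 : Type*} [mΩ : MeasurableSpace Ω] [StandardBorelSpace Ω] [Nonempty Ω]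
    {m𝒵 : MeasurableSpace 𝒵}
    (μ : Measure Ω) [IsProbabilityMeasure μ]
    {m : ℕ} (Y : Ω → Fin m) (Z : Ω → 𝒵)
    (hY : Measurable Y) (hZ : Measurable Z)
    -- the propensity score `s(Z) = (P(Y = y | Z))_{y=1}^m`, a `σ(Z)`-measurable random vector
    (s : Ω → Fin m → ℝ)
    (hs_meas : Measurable[MeasurableSpace.comap Z m𝒵] s)
    (hs : ∀ y : Fin m,
      (fun ω => s ω y) =ᵐ[μ]
        μ[Set.indicator {ω | Y ω = y} (fun _ => (1 : ℝ)) | MeasurableSpace.comap Z m𝒵]) :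
    -- conclusion: `Y ⫫ Z | σ(s)`
    CondIndepFun (MeasurableSpace.comap s (inferInstance : MeasurableSpace (Fin m → ℝ)))
      (hs_meas.comap_le.trans hZ.comap_le) Y Z μ :=
  propensity_score_is_balancing_score_general (mΩ := mΩ) μ Y Z hY hZ s hs_meas hs
end

section
/- Let Y be a random variable taking values in the finite set {1,...,m}, Z a random variable taking values in a measurable space 𝒵, and b : 𝒵 → ℬ a measurable function. Then Y and Z are conditionally independent given the σ-algebra σ(b(Z)) if and only if for every y ∈ {1,...,m}, the conditional expectation E[1_{Y=y} | σ(Z)] equals E[1_{Y=y} | σ(b(Z))] almost surely. -/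
/-!
An event `A` is conditionally independent of `σ(Z)` given the coarser `σ(b ∘ Z)` exactly when
`P(A | σ(Z)) = P(A | σ(b ∘ Z))`: integrating over `B ∈ σ(Z)` and pulling the
`σ(b ∘ Z)`-measurable factor out of the conditional expectation turns either identity into the
other. As `Y` takes finitely many values, every event of `σ(Y)` is a finite disjoint union of
events `{Y = y}`, so by additivity it suffices to test the events `{Y = y}`.
-/

open MeasureTheory ProbabilityTheory Filter

theorem Set.indicator_preimage_finset_eq_sum {Ω α : Type*} (Y : Ω → α) (s : Finset α) :
    (Y ⁻¹' s).indicator (fun _ => (1 : ℝ)) = ∑ y ∈ s, (Y ⁻¹' {y}).indicator fun _ => 1 := by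
  classical
  ext ω
  simp [Finset.sum_apply, Set.indicator_apply]

namespace MeasureTheory

variable {Ω : Type*} {m m₂ mΩ : MeasurableSpace Ω} {μ : Measure Ω} [IsFiniteMeasure μ]

theorem condExp_indicator_of_stronglyMeasurable {g : Ω → ℝ} (hg_sm : StronglyMeasurable[m] g)
    (hg : Integrable g μ) {t : Set Ω} (ht : MeasurableSet t) :
    μ[t.indicator g | m] =ᵐ[μ] g * μ⟦t | m⟧ := by
  have h_mul : t.indicator g = g * t.indicator fun _ => 1 := by
    ext ω
    by_cases hω : ω ∈ t <;> simp [hω]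
  rw [h_mul]
  exact condExp_mul_of_stronglyMeasurable_left hg_sm (h_mul ▸ hg.indicator ht)
    ((integrable_const 1).indicator ht)

theorem condExp_eq_condExp_iff_condExp_indicator_eq_mul (hm : m ≤ m₂) (hm₂ : m₂ ≤ mΩ)
    {f : Ω → ℝ} (hf : Integrable f μ) :
    μ[f | m₂] =ᵐ[μ] μ[f | m] ↔
      ∀ t, MeasurableSet[m₂] t → μ[t.indicator f | m] =ᵐ[μ] μ[f | m] * μ⟦t | m⟧ := by
  have h_pull : ∀ t, MeasurableSet[m₂] t →
      μ[t.indicator (μ[f | m]) | m] =ᵐ[μ] μ[f | m] * μ⟦t | m⟧ := fun t ht =>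
    condExp_indicator_of_stronglyMeasurable stronglyMeasurable_condExp integrable_condExp
      (hm₂ t ht)
  constructor
  · intro h t ht
    calc μ[t.indicator f | m]
        =ᵐ[μ] μ[μ[t.indicator f | m₂] | m] := (condExp_condExp_of_le hm hm₂).symm
      _ =ᵐ[μ] μ[t.indicator (μ[f | m]) | m] :=
          condExp_congr_ae ((condExp_indicator hf ht).trans h.indicator)
      _ =ᵐ[μ] μ[f | m] * μ⟦t | m⟧ := h_pull t ht
  · intro h
    refine (ae_eq_condExp_of_forall_setIntegral_eq hm₂ hf
      (fun _ _ _ => integrable_condExp.integrableOn) (fun t ht _ => ?_)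
      (stronglyMeasurable_condExp.mono hm).aestronglyMeasurable).symm
    calc ∫ ω in t, μ[f | m] ω ∂μ
        = ∫ ω, μ[t.indicator (μ[f | m]) | m] ω ∂μ := by
          rw [integral_condExp (hm.trans hm₂), integral_indicator (hm₂ t ht)]
      _ = ∫ ω, μ[t.indicator f | m] ω ∂μ :=
          integral_congr_ae ((h_pull t ht).trans (h t ht).symm)
      _ = ∫ ω in t, f ω ∂μ := by
          rw [integral_condExp (hm.trans hm₂), integral_indicator (hm₂ t ht)]

theorem condExp_set_eq_condExp_iff_condExp_inter_eq_mul (hm : m ≤ m₂) (hm₂ : m₂ ≤ mΩ)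
    {s : Set Ω} (hs : MeasurableSet s) :
    μ⟦s | m₂⟧ =ᵐ[μ] μ⟦s | m⟧ ↔
      ∀ t, MeasurableSet[m₂] t → μ⟦s ∩ t | m⟧ =ᵐ[μ] μ⟦s | m⟧ * μ⟦t | m⟧ := by
  simp_rw [Set.inter_comm s, ← Set.indicator_indicator]
  exact condExp_eq_condExp_iff_condExp_indicator_eq_mul hm hm₂ ((integrable_const 1).indicator hs)

theorem condExp_preimage_finset_eq_of_forall_singleton {α : Type*} [MeasurableSpace α]
    [MeasurableSingletonClass α] {Y : Ω → α} (hY : Measurable Y)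
    (h : ∀ y, μ⟦Y ⁻¹' {y} | m₂⟧ =ᵐ[μ] μ⟦Y ⁻¹' {y} | m⟧) (s : Finset α) :
    μ⟦Y ⁻¹' s | m₂⟧ =ᵐ[μ] μ⟦Y ⁻¹' s | m⟧ := by
  have h_int : ∀ y ∈ s, Integrable ((Y ⁻¹' {y}).indicator fun _ => (1 : ℝ)) μ := fun y _ =>
    (integrable_const 1).indicator (hY (measurableSet_singleton y))
  rw [Set.indicator_preimage_finset_eq_sum]
  exact (condExp_finsetSum h_int _).trans
    ((eventuallyEq_sum fun y _ => h y).trans (condExp_finsetSum h_int _).symm)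

end MeasureTheory

theorem condIndep_iff_condexp_eq_general
    {Ω 𝒵 ℬ : Type*} [mΩ : MeasurableSpace Ω] [StandardBorelSpace Ω]
    {m𝒵 : MeasurableSpace 𝒵} {mℬ : MeasurableSpace ℬ}
    (μ : Measure Ω) [IsProbabilityMeasure μ]
    {m : ℕ} (Y : Ω → Fin m) (Z : Ω → 𝒵) (b : 𝒵 → ℬ)
    (hY : Measurable Y) (hZ : Measurable Z) (hb : Measurable b) :
    CondIndepFun (MeasurableSpace.comap (fun ω => b (Z ω)) mℬ)
        ((hb.comp hZ).comap_le) Y Z μ ↔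
      ∀ y : Fin m,
        μ[Set.indicator {ω | Y ω = y} (fun _ => (1 : ℝ)) | MeasurableSpace.comap Z m𝒵]
          =ᵐ[μ]
        μ[Set.indicator {ω | Y ω = y} (fun _ => (1 : ℝ)) |
            MeasurableSpace.comap (fun ω => b (Z ω)) mℬ] := by
  have hbZ_le : MeasurableSpace.comap (fun ω => b (Z ω)) mℬ ≤ MeasurableSpace.comap Z m𝒵 :=
    (hb.comp (comap_measurable Z)).comap_le
  rw [condIndepFun_iff _ _ _ _ hY hZ]
  constructor
  · intro h y
    exact (condExp_set_eq_condExp_iff_condExp_inter_eq_mul hbZ_le hZ.comap_le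
      (hY (measurableSet_singleton y))).2
      fun t ht => h _ t ⟨{y}, measurableSet_singleton y, rfl⟩ ht
  · rintro h _ t ⟨s, -, rfl⟩ ht
    refine (condExp_set_eq_condExp_iff_condExp_inter_eq_mul hbZ_le hZ.comap_le
      (hY .of_discrete)).1 ?_ t ht
    simpa using condExp_preimage_finset_eq_of_forall_singleton hY h (Set.toFinite s).toFinset

/-- `Y ⫫ Z | σ(b ∘ Z)` holds if and only if, for every label `y`, the conditional
probabilities `P(Y = y | σ(Z))` and `P(Y = y | σ(b ∘ Z))` coincide almost surely. -/
theorem condIndep_iff_condexp_eq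
    {Ω 𝒵 ℬ : Type*} [mΩ : MeasurableSpace Ω] [StandardBorelSpace Ω] [Nonempty Ω]
    {m𝒵 : MeasurableSpace 𝒵} {mℬ : MeasurableSpace ℬ}
    (μ : Measure Ω) [IsProbabilityMeasure μ]
    {m : ℕ} (Y : Ω → Fin m) (Z : Ω → 𝒵) (b : 𝒵 → ℬ)
    (hY : Measurable Y) (hZ : Measurable Z) (hb : Measurable b) :
    CondIndepFun (MeasurableSpace.comap (fun ω => b (Z ω)) mℬ)
        ((hb.comp hZ).comap_le) Y Z μ ↔
      ∀ y : Fin m,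
        μ[Set.indicator {ω | Y ω = y} (fun _ => (1 : ℝ)) | MeasurableSpace.comap Z m𝒵]
          =ᵐ[μ]
        μ[Set.indicator {ω | Y ω = y} (fun _ => (1 : ℝ)) |
            MeasurableSpace.comap (fun ω => b (Z ω)) mℬ] :=
  condIndep_iff_condexp_eq_general (mΩ := mΩ) μ Y Z b hY hZ hb
end

section
/- Let m ≥ 2 and 1 ≤ a ≤ m−1 be integers, and let p(· | z) be a probability mass function on the label set {1,...,m} for a fixed covariate value z. Consider the following sampling scheme: draw an original label Y₀ from p(· | z); independently draw a labels uniformly at random without replacement from the m−1 labels different from Y₀; then output a label chosen uniformly at random from the resulting a+1 labels (the original together with the a alternatives). Then the output label distribution satisfies, for every y ∈ {1,...,m}: p̂(y | z) = (1/(a+1)) · ( a/(m−1) + ((m−a−1)/(m−1)) · p(y | z) ). -/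
/-!
Given the original label `y₀`, the output group `insert y₀ S` always has `a + 1` elements, so
the output is `y₀` with probability `1 / (a + 1)`, and any other label `y` with probability
`1 / (a + 1)` times the chance `C(m-2, a-1) / C(m-1, a) = a / (m-1)` that `y` is among the
alternatives. Averaging over `y₀ ~ p(· | z)` gives the formula.
-/

open Finset

theorem Nat.cast_choose_pred_div_choose {n k : ℕ} (hk : 1 ≤ k) (hkn : k ≤ n) :
    ((n - 1).choose (k - 1) : ℝ) / n.choose k = k / n := by
  obtain ⟨n, rfl⟩ : ∃ n', n = n' + 1 := ⟨n - 1, by omega⟩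
  obtain ⟨k, rfl⟩ : ∃ k', k = k' + 1 := ⟨k - 1, by omega⟩
  have hchoose : (0 : ℝ) < (n + 1).choose (k + 1) := by exact_mod_cast Nat.choose_pos hkn
  have key : ((n + 1 : ℕ) : ℝ) * n.choose k = (n + 1).choose (k + 1) * (k + 1 : ℕ) := by
    exact_mod_cast Nat.add_one_mul_choose_eq n k
  simp only [Nat.add_sub_cancel]
  rw [div_eq_div_iff hchoose.ne' (by positivity)]
  linarith

theorem Finset.card_filter_mem_powersetCard {α : Type*} [DecidableEq α] {t : Finset α} {y : α}
    (hy : y ∈ t) {n : ℕ} (hn : 1 ≤ n) :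
    #{S ∈ t.powersetCard n | y ∈ S} = (#t - 1).choose (n - 1) := by
  simpa using card_filter_powersetCard_subset {y} t n (singleton_subset_iff.2 hy) (by simpa)

section SemiBalanced

variable {α : Type*} [Fintype α] [DecidableEq α] {a : ℕ}

theorem card_filter_mem_insert_powersetCard_erase (ha : 1 ≤ a) (y₀ y : α) :
    #{S ∈ (univ.erase y₀).powersetCard a | y ∈ insert y₀ S} =
      if y₀ = y then (Fintype.card α - 1).choose a
      else (Fintype.card α - 2).choose (a - 1) := by
  have hcard : #(univ.erase y₀) = Fintype.card α - 1 := by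
    rw [card_erase_of_mem (mem_univ _), card_univ]
  split_ifs with hy
  · subst hy
    rw [filter_true_of_mem fun S _ ↦ mem_insert_self y₀ S, card_powersetCard, hcard]
  · have hmem : ∀ S, y ∈ insert y₀ S ↔ y ∈ S := fun S ↦ by
      rw [mem_insert, or_iff_right (Ne.symm hy)]
    simp only [hmem]
    rw [card_filter_mem_powersetCard (mem_erase.2 ⟨Ne.symm hy, mem_univ y⟩) ha, hcard, Nat.sub_sub]

/-- The law of the output label given the original label `y₀`. -/
theorem sum_powersetCard_erase_uniform_mem_insert (ha : 1 ≤ a) (ha' : a ≤ Fintype.card α - 1)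
    (y₀ y : α) :
    ∑ S ∈ (univ.erase y₀).powersetCard a,
        ((Fintype.card α - 1).choose a : ℝ)⁻¹ * (#(insert y₀ S) : ℝ)⁻¹ *
          (if y ∈ insert y₀ S then 1 else 0) =
      if y₀ = y then ((a : ℝ) + 1)⁻¹
      else (a : ℝ) / ((Fintype.card α : ℝ) - 1) * ((a : ℝ) + 1)⁻¹ := by
  have hgroup : ∀ S ∈ (univ.erase y₀).powersetCard a, #(insert y₀ S) = a + 1 := by
    intro S hS
    rw [mem_powersetCard] at hS
    rw [card_insert_of_notMem fun h ↦ notMem_erase y₀ univ (hS.1 h), hS.2]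
  rw [sum_congr rfl fun S hS ↦ by rw [hgroup S hS], ← mul_sum, sum_boole,
    card_filter_mem_insert_powersetCard_erase ha]
  have hchoose : ((Fintype.card α - 1).choose a : ℝ) ≠ 0 := by
    exact_mod_cast (Nat.choose_pos ha').ne'
  split_ifs
  · push_cast
    field_simp
  · have hcast : (((Fintype.card α - 1 : ℕ) : ℝ)) = (Fintype.card α : ℝ) - 1 := by
      rw [Nat.cast_sub (by omega), Nat.cast_one]
    rw [← hcast, ← Nat.cast_choose_pred_div_choose ha ha', show Fintype.card α - 1 - 1 =
      Fintype.card α - 2 by omega]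
    push_cast
    ring

end SemiBalanced

theorem Fintype.sum_mul_ite_eq {α R : Type*} [Fintype α] [DecidableEq α] [CommRing R]
    (f : α → R) (y : α) (A B : R) :
    ∑ x, f x * (if x = y then A else B) = B * ∑ x, f x + (A - B) * f y := by
  have hsplit : ∀ x, (if x = y then A else B) = B + if x = y then A - B else 0 := by
    intro x; split_ifs <;> ring
  simp only [hsplit, mul_add, mul_ite, mul_zero, sum_add_distrib, sum_ite_eq', ← sum_mul]
  ring

theorem semi_balanced_sampling_general
    {𝒵 : Type*} (m a : ℕ) (ha1 : 1 ≤ a) (ha2 : a ≤ m - 1)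
    -- the conditional label pmf `p (· | z)` for each covariate value `z`
    (p : 𝒵 → Fin m → ℝ) (hp_sum : ∀ z, ∑ y, p z y = 1)
    -- the output label distribution of the sampling scheme
    (phat : 𝒵 → Fin m → ℝ)
    (hphat : ∀ z y, phat z y =
      ∑ y₀ : Fin m, p z y₀ *
        ∑ S ∈ Finset.powersetCard a (Finset.univ.erase y₀),
          ((Nat.choose (m - 1) a : ℝ))⁻¹ * (((insert y₀ S).card : ℝ))⁻¹ *
            (if y ∈ insert y₀ S then 1 else 0)) :
    ∀ z y, phat z y =
      (1 / ((a : ℝ) + 1)) *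
        ((a : ℝ) / ((m : ℝ) - 1) + (((m : ℝ) - (a : ℝ) - 1) / ((m : ℝ) - 1)) * p z y) := by
  intro z y
  have hm : (m : ℝ) - 1 ≠ 0 := by
    have : (2 : ℝ) ≤ m := by exact_mod_cast (by omega : 2 ≤ m)
    linarith
  have hkernel := sum_powersetCard_erase_uniform_mem_insert (α := Fin m) ha1
    (by rwa [Fintype.card_fin])
  simp only [Fintype.card_fin] at hkernel
  rw [hphat, sum_congr rfl fun y₀ _ ↦ by rw [hkernel y₀ y], Fintype.sum_mul_ite_eq, hp_sum]
  field_simp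
  ring

/-- **Semi-balanced distribution of balanced mini-batch sampling (Theorem 4).**
For a fixed covariate value `z`, draw an original label `y₀` from `p (· | z)`, then draw
`a` alternative labels uniformly at random without replacement from the `m - 1` labels
different from `y₀` (equivalently, a uniformly random `a`-element subset `S` of the labels
other than `y₀`), and output a uniformly random element of the `a + 1` labels
`insert y₀ S`.  The resulting label distribution is
`p̂(y|z) = (1/(a+1)) * (a/(m-1) + ((m-a-1)/(m-1)) * p(y|z))`. -/
theorem semi_balanced_sampling
    {𝒵 : Type*} (m a : ℕ) (hm : 2 ≤ m) (ha1 : 1 ≤ a) (ha2 : a ≤ m - 1)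
    -- the conditional label pmf `p (· | z)` for each covariate value `z`
    (p : 𝒵 → Fin m → ℝ) (hp_nonneg : ∀ z y, 0 ≤ p z y) (hp_sum : ∀ z, ∑ y, p z y = 1)
    -- the output label distribution of the sampling scheme
    (phat : 𝒵 → Fin m → ℝ)
    (hphat : ∀ z y, phat z y =
      ∑ y₀ : Fin m, p z y₀ *
        ∑ S ∈ Finset.powersetCard a (Finset.univ.erase y₀),
          ((Nat.choose (m - 1) a : ℝ))⁻¹ * (((insert y₀ S).card : ℝ))⁻¹ *
            (if y ∈ insert y₀ S then 1 else 0)) :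
    ∀ z y, phat z y =
      (1 / ((a : ℝ) + 1)) *
        ((a : ℝ) / ((m : ℝ) - 1) + (((m : ℝ) - (a : ℝ) - 1) / ((m : ℝ) - 1)) * p z y) :=
  semi_balanced_sampling_general m a ha1 ha2 p hp_sum phat hphat
end

section
/- Let f, g, k be integrable functions on ℝ^d with k integrable, and suppose the Fourier transform (characteristic function) of k is nonzero outside a set of Lebesgue measure zero. If the convolutions satisfy f ⋆ k = g ⋆ k Lebesgue-almost everywhere on ℝ^d, then f = g Lebesgue-almost everywhere. -/
open MeasureTheory FourierTransform Convolution
open scoped ContDiff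

/-!
Taking Fourier transforms turns `f ⋆ k = g ⋆ k` into `𝓕 f · 𝓕 k = 𝓕 g · 𝓕 k`, so `𝓕 f = 𝓕 g` off the
null zero set of `𝓕 k`. An integrable function is determined by its Fourier transform: by the
duality `∫ 𝓕 χ • f = ∫ χ • 𝓕 f` for Schwartz `χ`, applied to `χ = 𝓕⁻ φ`, the integrals of `f` and
`g` against every smooth compactly supported `φ` agree.
-/

theorem ofReal_convolution_mul {G : Type*} [MeasurableSpace G] [Sub G]
    (μ : Measure G) (f k : G → ℝ) :
    (fun x => ((f ⋆[ContinuousLinearMap.mul ℝ ℝ, μ] k) x : ℂ)) =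
      (fun x => (f x : ℂ)) ⋆[ContinuousLinearMap.mul ℂ ℂ, μ] (fun x => (k x : ℂ)) := by
  ext x
  simp only [convolution_def, ContinuousLinearMap.mul_apply', ← Complex.ofReal_mul,
    integral_complex_ofReal]

namespace Real

variable {E F : Type*} [NormedAddCommGroup E] [InnerProductSpace ℝ E] [FiniteDimensional ℝ E]
  [MeasurableSpace E] [BorelSpace E] [NormedAddCommGroup F] [NormedSpace ℂ F] [CompleteSpace F]

theorem integral_fourier_smul_eq_of_integrable (φ : SchwartzMap E ℂ) {f : E → F}
    (hf : Integrable f) : ∫ ξ, 𝓕 φ ξ • f ξ = ∫ x, φ x • 𝓕 f x := by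
  have := VectorFourier.integral_fourierIntegral_smul_eq_flip (L := innerₗ E)
    continuous_fourierChar continuous_inner (φ.integrable (μ := volume)) hf
  rw [flip_innerₗ] at this
  rwa [SchwartzMap.fourier_coe]

theorem ae_eq_of_fourier_ae_eq {f g : E → F} (hf : Integrable f) (hg : Integrable g)
    (h : 𝓕 f =ᵐ[volume] 𝓕 g) : f =ᵐ[volume] g := by
  refine ae_eq_of_integral_contDiff_smul_eq hf.locallyIntegrable hg.locallyIntegrable
    fun φ hφ hφs => ?_
  let ψ : SchwartzMap E ℂ :=
    (hφs.comp_left Complex.ofReal_zero).toSchwartzMap (Complex.ofRealCLM.contDiff.comp hφ)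
  have hψ : ∀ x, 𝓕 (𝓕⁻ ψ) x = φ x := fun x => by rw [fourier_fourierInv_eq]; rfl
  have hφψ : ∀ u : E → F, ∫ x, φ x • u x = ∫ x, 𝓕 (𝓕⁻ ψ) x • u x := fun u => by
    simp_rw [hψ, Complex.coe_smul]
  rw [hφψ, hφψ, integral_fourier_smul_eq_of_integrable _ hf,
    integral_fourier_smul_eq_of_integrable _ hg]
  exact integral_congr_ae (h.mono fun ξ hξ => congrArg _ hξ)

theorem ae_eq_of_convolution_ae_eq {f g k : E → ℂ} (hf : Integrable f) (hg : Integrable g)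
    (hk : Integrable k) (hk0 : ∀ᵐ ξ, 𝓕 k ξ ≠ 0)
    (h : f ⋆[ContinuousLinearMap.mul ℂ ℂ] k =ᵐ[volume] g ⋆[ContinuousLinearMap.mul ℂ ℂ] k) :
    f =ᵐ[volume] g := by
  have hprod : ∀ ξ, 𝓕 f ξ * 𝓕 k ξ = 𝓕 g ξ * 𝓕 k ξ := fun ξ => by
    rw [← fourier_mul_convolution_eq hf hk, ← fourier_mul_convolution_eq hg hk]
    exact fourier_congr_ae h ξ
  exact ae_eq_of_fourier_ae_eq hf hg (hk0.mono fun ξ hξ => mul_right_cancel₀ hξ (hprod ξ))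

end Real

/-- **Deconvolution.**
Let `f, g, k` be integrable functions on `ℝ^d` such that the Fourier transform
(characteristic function) of `k` vanishes only on a Lebesgue-null set.  If
`f ⋆ k = g ⋆ k` Lebesgue-almost everywhere, then `f = g` Lebesgue-almost everywhere. -/
theorem deconvolution_ae_eq
    {d : ℕ} (f g k : EuclideanSpace ℝ (Fin d) → ℝ)
    (hf : Integrable f) (hg : Integrable g) (hk : Integrable k)
    -- the zero set of the Fourier transform of `k` has Lebesgue measure zero
    (hkhat : volume {w : EuclideanSpace ℝ (Fin d) |
      𝓕 (fun x => (k x : ℂ)) w = 0} = 0)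
    -- the convolutions agree almost everywhere
    (hconv : (f ⋆[ContinuousLinearMap.mul ℝ ℝ] k) =ᵐ[volume]
             (g ⋆[ContinuousLinearMap.mul ℝ ℝ] k)) :
    f =ᵐ[volume] g := by
  have hconvℂ : (fun x => (f x : ℂ)) ⋆[ContinuousLinearMap.mul ℂ ℂ] (fun x => (k x : ℂ))
      =ᵐ[volume] (fun x => (g x : ℂ)) ⋆[ContinuousLinearMap.mul ℂ ℂ] (fun x => (k x : ℂ)) := by
    rw [← ofReal_convolution_mul, ← ofReal_convolution_mul]
    exact hconv.fun_comp Complex.ofReal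
  have hfg := Real.ae_eq_of_convolution_ae_eq hf.ofReal hg.ofReal hk.ofReal
    (measure_eq_zero_iff_ae_notMem.1 hkhat) hconvℂ
  exact hfg.mono fun x hx => Complex.ofReal_injective hx
end
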